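/- arXiv:1102.5207 — 3 statements merged into one kernel-verified Lean document; each statement's English description precedes it below -/
import Mathlib

section
/- For all real t, y with 0 ≤ t ≤ y, one has exp(-2β ∫_t^y (cos s)/s ds) ≤ 3^{2β}, where β > 0 is a fixed constant. In particular ∫_t^y (cos s)/s ds ≥ -ln 3 for all 0 ≤ t ≤ y. -/
/-!
On `(0, π]` the weight `1 / s` is at least `2 / π` where `cos` is nonnegative and at most `2 / π`
where it is nonpositive, so `cos s / s ≥ (2 / π) cos s` there and `∫_t^y cos s / s ≥ -2 / π` for
`y ≤ π`. Beyond `π`, the function `(1 + sin s) / s` has derivative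
`cos s / s - (1 + sin s) / s² ≤ cos s / s`, so `∫_t^y cos s / s ≥ -(1 + sin t) / t ≥ -2 / t`.
Splitting at `π` gives `∫_t^y cos s / s ≥ -3 / π > -1 > -log 3`, and the exponential bound follows.
-/

open Real Set MeasureTheory intervalIntegral

theorem two_div_pi_mul_cos_le_cos_div {s : ℝ} (hs₀ : 0 < s) (hsπ : s ≤ π) :
    2 / π * cos s ≤ cos s / s := by
  rw [div_mul_eq_mul_div, div_le_div_iff₀ pi_pos hs₀]
  rcases le_total s (π / 2) with hs | hs
  · nlinarith [cos_nonneg_of_mem_Icc ⟨by linarith [pi_pos], hs⟩]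
  · nlinarith [cos_nonpos_of_pi_div_two_le_of_le hs (by linarith)]

theorem two_div_pi_mul_sin_sub_sin_le_integral_cos_div {a b : ℝ} (ha : 0 ≤ a) (hab : a ≤ b)
    (hbπ : b ≤ π) (hint : IntervalIntegrable (fun s => cos s / s) volume a b) :
    2 / π * (sin b - sin a) ≤ ∫ s in a..b, cos s / s := by
  rw [mul_sub]
  refine sub_le_integral_of_hasDeriv_right_of_le hab (by fun_prop)
    (fun x _ => ((hasDerivAt_sin x).const_mul _).hasDerivWithinAt)
    ((intervalIntegrable_iff_integrableOn_Icc_of_le hab).1 hint) fun x hx => ?_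
  exact two_div_pi_mul_cos_le_cos_div (ha.trans_lt hx.1) (hx.2.le.trans hbπ)

theorem one_add_sin_div_sub_le_integral_cos_div {a b : ℝ} (ha : 0 < a) (hab : a ≤ b) :
    (1 + sin b) / b - (1 + sin a) / a ≤ ∫ s in a..b, cos s / s := by
  have hpos : ∀ x ∈ Icc a b, 0 < x := fun x hx => ha.trans_le hx.1
  refine sub_le_integral_of_hasDeriv_right_of_le hab
    (ContinuousOn.div (by fun_prop) continuousOn_id fun x hx => (hpos x hx).ne')
    (fun x hx => (((hasDerivAt_sin x).const_add 1).div (hasDerivAt_id x)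
      (hpos x (Ioo_subset_Icc_self hx)).ne').hasDerivWithinAt)
    (ContinuousOn.integrableOn_Icc
      (ContinuousOn.div (by fun_prop) continuousOn_id fun x hx => (hpos x hx).ne'))
    fun x hx => ?_
  have hx := hpos x (Ioo_subset_Icc_self hx)
  have hsin : 0 ≤ (1 + sin x) / x ^ 2 := div_nonneg (by linarith [neg_one_le_sin x]) (sq_nonneg x)
  rw [sub_div, mul_one, id, show cos x * x / x ^ 2 = cos x / x by field_simp]
  linarith

theorem neg_three_div_pi_le_integral_cos_div {t y : ℝ} (ht : 0 ≤ t) (hty : t ≤ y)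
    (hint : IntervalIntegrable (fun s => cos s / s) volume t y) :
    -(3 / π) ≤ ∫ s in t..y, cos s / s := by
  have hπ := pi_pos
  have h2π : 0 < 2 / π := by positivity
  have h23 : 2 / π ≤ 3 / π := div_le_div_of_nonneg_right (by norm_num) hπ.le
  have hy_nonneg : 0 ≤ (1 + sin y) / y := div_nonneg (by linarith [neg_one_le_sin y]) (by linarith)
  rcases le_total y π with hyπ | hπy
  · have hA := two_div_pi_mul_sin_sub_sin_le_integral_cos_div ht hty hyπ hint
    have hsin : -1 ≤ sin y - sin t := by
      linarith [sin_nonneg_of_nonneg_of_le_pi (ht.trans hty) hyπ, sin_le_one t]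
    have := mul_le_mul_of_nonneg_left hsin h2π.le
    linarith
  rcases le_total t π with htπ | hπt
  · have hπ_mem : π ∈ uIcc t y := by rw [uIcc_of_le hty]; exact ⟨htπ, hπy⟩
    rw [← integral_add_adjacent_intervals (hint.mono_set (uIcc_subset_uIcc left_mem_uIcc hπ_mem))
      (hint.mono_set (uIcc_subset_uIcc hπ_mem right_mem_uIcc))]
    have hA := two_div_pi_mul_sin_sub_sin_le_integral_cos_div ht htπ le_rfl
      (hint.mono_set (uIcc_subset_uIcc left_mem_uIcc hπ_mem))
    have hB := one_add_sin_div_sub_le_integral_cos_div hπ hπy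
    have := mul_le_mul_of_nonneg_left (sin_le_one t) h2π.le
    rw [sin_pi, zero_sub, mul_neg] at hA
    rw [sin_pi, add_zero] at hB
    linarith [show 3 / π = 2 / π * 1 + 1 / π by ring]
  · have hB := one_add_sin_div_sub_le_integral_cos_div (hπ.trans_le hπt) hty
    have : (1 + sin t) / t ≤ 2 / π :=
      div_le_div₀ zero_le_two (by linarith [sin_le_one t]) hπ hπt
    linarith

theorem neg_log_three_le_integral_cos_div {t y : ℝ} (ht : 0 ≤ t) (hty : t ≤ y) :
    -log 3 ≤ ∫ s in t..y, cos s / s := by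
  have hlog := log_three_gt_d9
  by_cases hint : IntervalIntegrable (fun s => cos s / s) volume t y
  · calc -log 3 ≤ -1 := by linarith
      _ ≤ -(3 / π) := by rw [neg_le_neg_iff, div_le_one pi_pos]; exact pi_gt_three.le
      _ ≤ ∫ s in t..y, cos s / s := neg_three_div_pi_le_integral_cos_div ht hty hint
  -- for `t = 0 < y` the integrand is not integrable and the integral is `0` by convention
  · rw [integral_undef hint]
    linarith

/-- For `β > 0` and all `0 ≤ t ≤ y`, `exp(-2β ∫_t^y cos s / s ds) ≤ 3^{2β}`;
in particular `∫_t^y cos s / s ds ≥ -ln 3`. -/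
theorem exp_neg_cos_integral_le (β : ℝ) (hβ : 0 < β) (t y : ℝ) (ht : 0 ≤ t) (hty : t ≤ y) :
    Real.exp (-2 * β * ∫ s in t..y, Real.cos s / s) ≤ (3 : ℝ) ^ (2 * β) ∧
      -Real.log 3 ≤ ∫ s in t..y, Real.cos s / s := by
  have hI := neg_log_three_le_integral_cos_div ht hty
  refine ⟨?_, hI⟩
  rw [rpow_def_of_pos three_pos, exp_le_exp]
  nlinarith
end

section
/- Fix β > 0 and ε ∈ ℝ. Define V⁽³⁾ₙ(ε) = (β/n)(cos(εn) − ∫_n^{n+1}cos(εr)dr)·diag(1, −1) + (β/n)·sin(εn)·[[0,1],[1,0]]. Then ‖V⁽³⁾ₙ(ε)‖ ≤ (5β/2)·|ε| for every n ≥ 1. -/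
/-! The diagonal coefficient is `cos(εn)` minus its average over `[n, n + 1]`, which is at most the
Lipschitz constant `|ε|` of `r ↦ cos(εr)`; the off-diagonal coefficient satisfies
`|sin(εn)| ≤ n|ε|`. Both matrices are symmetric involutions, hence of operator norm one, so
`‖V⁽³⁾ₙ(ε)‖ ≤ (β/n)|ε| + β|ε| ≤ 2β|ε|`. -/

open scoped Matrix.Norms.L2Operator

theorem LipschitzWith.norm_sub_intervalIntegral_add_one_le {E : Type*} [NormedAddCommGroup E]
    [NormedSpace ℝ E] [CompleteSpace E] {K : NNReal} {f : ℝ → E} (hf : LipschitzWith K f)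
    (a : ℝ) : ‖f a - ∫ x in a..a + 1, f x‖ ≤ K := by
  rw [show f a = ∫ _ in a..a + 1, f a by simp,
    ← intervalIntegral.integral_sub intervalIntegrable_const
      (hf.continuous.intervalIntegrable _ _)]
  calc ‖∫ x in a..a + 1, f a - f x‖ ≤ K * |a + 1 - a| :=
        intervalIntegral.norm_integral_le_of_norm_le_const fun x hx => ?_
    _ = K := by simp
  rw [Set.uIoc_of_le (by linarith)] at hx
  calc ‖f a - f x‖ = dist (f a) (f x) := (dist_eq_norm _ _).symm
    _ ≤ K * dist a x := hf.dist_le_mul a x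
    _ ≤ K * 1 := by
        gcongr
        rw [Real.dist_eq, abs_le]
        constructor <;> linarith [hx.1, hx.2]
    _ = K := mul_one _

theorem CStarRing.norm_eq_one_of_isSelfAdjoint_of_mul_self_eq_one {E : Type*} [NormedRing E]
    [StarRing E] [CStarRing E] [Nontrivial E] {A : E} (hA : IsSelfAdjoint A) (hAA : A * A = 1) :
    ‖A‖ = 1 :=
  CStarRing.norm_of_mem_unitary <| Unitary.mem_iff.2 <| by rw [hA.star_eq]; exact ⟨hAA, hAA⟩

theorem Matrix.norm_diag_one_neg_one : ‖!![(1 : ℝ), 0; 0, -1]‖ = 1 :=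
  CStarRing.norm_eq_one_of_isSelfAdjoint_of_mul_self_eq_one
    (by ext i j; fin_cases i <;> fin_cases j <;> simp)
    (by rw [Matrix.mul_fin_two, Matrix.one_fin_two]; norm_num)

theorem Matrix.norm_swap_fin_two : ‖!![(0 : ℝ), 1; 1, 0]‖ = 1 :=
  CStarRing.norm_eq_one_of_isSelfAdjoint_of_mul_self_eq_one
    (by ext i j; fin_cases i <;> fin_cases j <;> simp)
    (by rw [Matrix.mul_fin_two, Matrix.one_fin_two]; norm_num)

theorem Real.abs_cos_mul_sub_intervalIntegral_le (ε a : ℝ) :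
    |Real.cos (ε * a) - ∫ r in a..a + 1, Real.cos (ε * r)| ≤ |ε| := by
  simpa using
    (Real.lipschitzWith_cos.comp (lipschitzWith_smul ε)).norm_sub_intervalIntegral_add_one_le a

/-- The matrices `V⁽³⁾ₙ(ε)` satisfy `‖V⁽³⁾ₙ(ε)‖ ≤ (5β/2)·|ε|` for every `n ≥ 1`. -/
theorem V3_norm_bound (β : ℝ) (hβ : 0 < β) (ε : ℝ)
    (V3 : ℕ → Matrix (Fin 2) (Fin 2) ℝ)
    (hV3 : ∀ n : ℕ, V3 n =
      ((β / n) * (Real.cos (ε * n) - ∫ r in (n : ℝ)..((n : ℝ) + 1), Real.cos (ε * r))) •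
        !![(1 : ℝ), 0; 0, -1] +
      ((β / n) * Real.sin (ε * n)) • !![(0 : ℝ), 1; 1, 0]) :
    ∀ n : ℕ, 1 ≤ n → ‖V3 n‖ ≤ (5 * β / 2) * |ε| := by
  intro n hn
  have hn : (1 : ℝ) ≤ n := by exact_mod_cast hn
  have hc : 0 ≤ β / n := by positivity
  have hsin : |Real.sin (ε * n)| ≤ n * |ε| := by
    simpa [abs_mul, mul_comm] using Real.abs_sin_le_abs (x := ε * n)
  calc ‖V3 n‖
      ≤ β / n * |Real.cos (ε * n) - ∫ r in (n : ℝ)..(n + 1), Real.cos (ε * r)| +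
          β / n * |Real.sin (ε * n)| := by
        rw [hV3]
        refine (norm_add_le _ _).trans_eq ?_
        rw [norm_smul, norm_smul, Matrix.norm_diag_one_neg_one, Matrix.norm_swap_fin_two,
          Real.norm_eq_abs, Real.norm_eq_abs, abs_mul, abs_mul, abs_of_nonneg hc, mul_one, mul_one]
    _ ≤ β / n * |ε| + β / n * (n * |ε|) := by
        gcongr β / n * ?_ + β / n * ?_
        exact Real.abs_cos_mul_sub_intervalIntegral_le ε n
    _ = β / n * |ε| + β * |ε| := by field_simp
    _ ≤ (5 * β / 2) * |ε| := by
        have : β / n ≤ β := div_le_self hβ.le hn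
        nlinarith [abs_nonneg ε]
end

section
/- Let β > 0, let (Rₙ) be 2×2 complex matrices with ∑ₙ‖Rₙ‖ < ∞, and consider the recursion uₙ₊₁ = (diag(1, 1 − 2β/n) + Rₙ)uₙ for n ≥ 1. Then for every initial vector u₁ ∈ ℂ², the limit lim_{n→∞} uₙ exists, and the linear map u₁ ↦ lim_{n→∞} uₙ has rank at most one; moreover the limit always lies in the span of (1, 0). -/
/-!
Once `2β/n ≤ 1`, the diagonal part has L²-operator norm at most `1`, so
`‖uₙ₊₁‖ ≤ (1 + ‖Rₙ‖) ‖uₙ‖` and every solution is bounded. The first coordinate then has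
summable increments `(Rₙ uₙ)₀` and converges, while the second satisfies
`|yₙ₊₁| ≤ (1 - 2β/n) |yₙ| + O(‖Rₙ‖)`, which forces `yₙ → 0` because `∑ 2β/n = ∞`.
The limit map is linear as the pointwise limit of the transfer matrices `Aₙ ⋯ A₁`.
-/

open Filter Topology Matrix
open scoped Matrix.Norms.L2Operator

section RealSequences

variable {x r y c e : ℕ → ℝ}

theorem exists_forall_le_of_le_one_add_mul (hr0 : ∀ n, 0 ≤ r n) (hr : Summable r)
    (hx0 : 0 ≤ x 0) (hx : ∀ n, x (n + 1) ≤ (1 + r n) * x n) :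
    ∃ C, ∀ n, x n ≤ C := by
  have key : ∀ n, x n ≤ x 0 * Real.exp (∑ k ∈ Finset.range n, r k) := by
    intro n
    induction n with
    | zero => simp
    | succ n ih =>
      calc x (n + 1) ≤ (1 + r n) * x n := hx n
        _ ≤ (1 + r n) * (x 0 * Real.exp (∑ k ∈ Finset.range n, r k)) := by
          gcongr; linarith [hr0 n]
        _ ≤ Real.exp (r n) * (x 0 * Real.exp (∑ k ∈ Finset.range n, r k)) := by
          gcongr; linarith [Real.add_one_le_exp (r n)]
        _ = x 0 * Real.exp (∑ k ∈ Finset.range (n + 1), r k) := by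
          rw [Finset.sum_range_succ, Real.exp_add]; ring
  refine ⟨x 0 * Real.exp (∑' k, r k), fun n => (key n).trans ?_⟩
  gcongr
  exact hr.sum_le_tsum _ fun k _ => hr0 k

theorem tendsto_zero_of_le_one_sub_mul_add (hy : ∀ n, 0 ≤ y n) (hc0 : ∀ n, 0 ≤ c n)
    (hc : ¬Summable c) (he : Summable e) (hrec : ∀ n, y (n + 1) ≤ (1 - c n) * y n + e n) :
    Tendsto y atTop (𝓝 0) := by
  -- `z = y - ∑_{k<n} e k` is a Lyapunov function: it decreases by at least `c n * y n` per step.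
  set E : ℕ → ℝ := fun n => ∑ k ∈ Finset.range n, e k
  set z : ℕ → ℝ := fun n => y n - E n
  have hE : Tendsto E atTop (𝓝 (∑' k, e k)) := he.hasSum.tendsto_sum_nat
  have hz_step : ∀ n, z (n + 1) + c n * y n ≤ z n := fun n => by
    simp only [z, E, Finset.sum_range_succ]; linarith [hrec n]
  have hz_anti : Antitone z := antitone_nat_of_succ_le fun n => by
    linarith [hz_step n, mul_nonneg (hc0 n) (hy n)]
  obtain ⟨B, hB⟩ := hE.bddAbove_range
  have hz_ge : ∀ n, -B ≤ z n := fun n => by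
    linarith [hy n, hB (Set.mem_range_self n)]
  have hzL := tendsto_atTop_ciInf hz_anti ⟨-B, Set.forall_mem_range.2 hz_ge⟩
  set l := (⨅ n, z n) + ∑' k, e k
  have hyl : Tendsto y atTop (𝓝 l) := (hzL.add hE).congr fun n => by simp [z]
  have hcy : Summable fun n => c n * y n := by
    refine summable_of_sum_range_le (c := z 0 + B) (fun n => mul_nonneg (hc0 n) (hy n))
      fun m => ?_
    calc ∑ k ∈ Finset.range m, c k * y k ≤ ∑ k ∈ Finset.range m, (z k - z (k + 1)) :=
          Finset.sum_le_sum fun k _ => by linarith [hz_step k]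
      _ = z 0 - z m := Finset.sum_range_sub' z m
      _ ≤ z 0 + B := by linarith [hz_ge m]
  -- If `y → l > 0`, then eventually `c ≤ (2 / l) * c * y`, forcing `∑ c < ∞`.
  obtain hl | hl : l = 0 ∨ 0 < l := (ge_of_tendsto' hyl hy).eq_or_lt'
  · rwa [hl] at hyl
  refine absurd ?_ hc
  refine (hcy.mul_left (2 / l)).of_norm_bounded_eventually_nat ?_
  filter_upwards [hyl.eventually (lt_mem_nhds (half_lt_self hl))] with n hn
  rw [Real.norm_of_nonneg (hc0 n)]
  calc c n = 2 / l * (c n * (l / 2)) := by field_simp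
    _ ≤ 2 / l * (c n * y n) := by gcongr; exact hc0 n

end RealSequences

section Transfer

variable {ι R : Type*} [Fintype ι] [DecidableEq ι] [CommSemiring R]

def transferMatrix (A : ℕ → Matrix ι ι R) : ℕ → Matrix ι ι R
  | 0 => 1
  | n + 1 => A n * transferMatrix A n

theorem transferMatrix_succ_mulVec (A : ℕ → Matrix ι ι R) (n : ℕ) (f : ι → R) :
    transferMatrix A (n + 1) *ᵥ f = A n *ᵥ (transferMatrix A n *ᵥ f) := by
  rw [transferMatrix, mulVec_mulVec]

theorem eq_transferMatrix_mulVec {A : ℕ → Matrix ι ι R} {u : ℕ → ι → R}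
    (hu : ∀ n, u (n + 1) = A n *ᵥ u n) (n : ℕ) : u n = transferMatrix A n *ᵥ u 0 := by
  induction n with
  | zero => simp [transferMatrix]
  | succ n ih => rw [hu, ih, transferMatrix_succ_mulVec]

end Transfer

section L2OperatorNorm

variable {𝕜 m n : Type*} [RCLike 𝕜] [Fintype m] [Fintype n] [DecidableEq n]

theorem norm_toLp_mulVec_le (A : Matrix m n 𝕜) (v : n → 𝕜) :
    ‖WithLp.toLp 2 (A *ᵥ v)‖ ≤ ‖A‖ * ‖WithLp.toLp 2 v‖ :=
  A.l2_opNorm_mulVec (WithLp.toLp 2 v)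

theorem norm_mulVec_apply_le (A : Matrix m n 𝕜) (v : n → 𝕜) (i : m) :
    ‖(A *ᵥ v) i‖ ≤ ‖A‖ * ‖WithLp.toLp 2 v‖ :=
  (PiLp.norm_apply_le (WithLp.toLp 2 (A *ᵥ v)) i).trans (norm_toLp_mulVec_le A v)

end L2OperatorNorm

section DiagonalModel

variable {𝕜 : Type*} [RCLike 𝕜]

theorem norm_diagonal_one_sub_le_one {t : ℝ} (ht0 : 0 ≤ t) (ht1 : t ≤ 1) :
    ‖(diagonal ![1, 1 - (t : 𝕜)] : Matrix (Fin 2) (Fin 2) 𝕜)‖ ≤ 1 := by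
  rw [l2_opNorm_diagonal, pi_norm_le_iff_of_nonneg zero_le_one, Fin.forall_fin_two]
  refine ⟨by simp, ?_⟩
  rw [cons_val_one, cons_val_zero, ← RCLike.ofReal_one, ← RCLike.ofReal_sub,
    RCLike.norm_of_nonneg (by linarith)]
  linarith

theorem exists_tendsto_smul_of_diagonal_add {c : ℕ → ℝ} {S : ℕ → Matrix (Fin 2) (Fin 2) 𝕜}
    {v : ℕ → Fin 2 → 𝕜} (hc0 : ∀ n, 0 ≤ c n) (hc1 : ∀ n, c n ≤ 1) (hc : ¬Summable c)
    (hS : Summable fun n => ‖S n‖)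
    (hv : ∀ n, v (n + 1) = (diagonal ![1, 1 - (c n : 𝕜)] + S n) *ᵥ v n) :
    ∃ a : 𝕜, Tendsto v atTop (𝓝 (a • ![1, 0])) := by
  have hx : ∀ n, ‖WithLp.toLp 2 (v (n + 1))‖ ≤ (1 + ‖S n‖) * ‖WithLp.toLp 2 (v n)‖ := fun n =>
    calc ‖WithLp.toLp 2 (v (n + 1))‖
        ≤ ‖diagonal ![1, 1 - (c n : 𝕜)] + S n‖ * ‖WithLp.toLp 2 (v n)‖ := by
          rw [hv]; exact norm_toLp_mulVec_le _ _
      _ ≤ (1 + ‖S n‖) * ‖WithLp.toLp 2 (v n)‖ := by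
          gcongr
          calc ‖diagonal ![1, 1 - (c n : 𝕜)] + S n‖
              ≤ ‖(diagonal ![1, 1 - (c n : 𝕜)] : Matrix (Fin 2) (Fin 2) 𝕜)‖ + ‖S n‖ :=
                norm_add_le _ _
            _ ≤ 1 + ‖S n‖ := by grw [norm_diagonal_one_sub_le_one (hc0 n) (hc1 n)]
  obtain ⟨C, hC⟩ := exists_forall_le_of_le_one_add_mul
    (x := fun n => ‖WithLp.toLp 2 (v n)‖) (fun n => norm_nonneg (S n)) hS (norm_nonneg _) hx
  have hSv : ∀ n i, ‖(S n *ᵥ v n) i‖ ≤ ‖S n‖ * C := fun n i =>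
    (norm_mulVec_apply_le _ _ i).trans (by gcongr; exact hC n)
  have hv0 : ∀ n, v (n + 1) 0 = v n 0 + (S n *ᵥ v n) 0 := fun n => by
    rw [hv, add_mulVec, Pi.add_apply, mulVec_diagonal]; simp
  have hv1 : ∀ n, v (n + 1) 1 = (1 - (c n : 𝕜)) * v n 1 + (S n *ᵥ v n) 1 := fun n => by
    rw [hv, add_mulVec, Pi.add_apply, mulVec_diagonal]; simp
  obtain ⟨a, ha⟩ := cauchySeq_tendsto_of_complete <|
    cauchySeq_of_dist_le_of_summable (f := fun n => v n 0) (fun n => ‖S n‖ * C)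
      (fun n => by rw [dist_eq_norm', hv0, add_sub_cancel_left]; exact hSv n 0) (hS.mul_right C)
  have hb : Tendsto (fun n => v n 1) atTop (𝓝 0) := by
    refine tendsto_zero_iff_norm_tendsto_zero.2 <| tendsto_zero_of_le_one_sub_mul_add
      (y := fun n => ‖v n 1‖) (fun n => norm_nonneg _) hc0 hc (hS.mul_right C) fun n => ?_
    calc ‖v (n + 1) 1‖ ≤ ‖1 - (c n : 𝕜)‖ * ‖v n 1‖ + ‖S n‖ * C := by
          rw [hv1]; grw [norm_add_le, norm_mul, hSv n 1]
      _ = (1 - c n) * ‖v n 1‖ + ‖S n‖ * C := by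
          rw [← RCLike.ofReal_one, ← RCLike.ofReal_sub,
            RCLike.norm_of_nonneg (by linarith [hc1 n])]
  exact ⟨a, tendsto_pi_nhds.2 <| Fin.forall_fin_two.2 ⟨by simpa using ha, by simpa using hb⟩⟩

end DiagonalModel

theorem exists_tendsto_smul_of_resonance {β : ℝ} (hβ : 0 < β) {R : ℕ → Matrix (Fin 2) (Fin 2) ℂ}
    (hR : Summable fun n => ‖R n‖) {w : ℕ → Fin 2 → ℂ}
    (hw : ∀ n, w (n + 1) =
      (diagonal ![1, 1 - ((2 * β / (n + 1 : ℕ) : ℝ) : ℂ)] + R (n + 1)) *ᵥ w n) :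
    ∃ a : ℂ, Tendsto w atTop (𝓝 (a • ![1, 0])) := by
  obtain ⟨N, hN⟩ : ∃ N : ℕ, 2 * β ≤ N := exists_nat_ge _
  have hc : ¬Summable fun n : ℕ => 2 * β / ((n + (N + 1) : ℕ) : ℝ) := fun h => by
    refine Real.not_summable_one_div_natCast ((summable_nat_add_iff (N + 1)).1 ?_)
    refine (h.mul_left (2 * β)⁻¹).congr fun n => ?_
    field_simp
  have hc1 (n : ℕ) : 2 * β / ((n + (N + 1) : ℕ) : ℝ) ≤ 1 :=
    div_le_one_of_le₀ (hN.trans (by push_cast; linarith)) (by positivity)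
  have hS : Summable fun n => ‖R (n + (N + 1))‖ :=
    (summable_nat_add_iff (f := fun n => ‖R n‖) (N + 1)).2 hR
  obtain ⟨a, ha⟩ := exists_tendsto_smul_of_diagonal_add (v := fun n => w (n + N))
    (fun n => by positivity) hc1 hc hS fun n => by
      -- `rfl` identifies the `RCLike` coercion `ℝ → ℂ` with `Complex.ofReal`.
      rw [Nat.add_right_comm, hw, ← add_assoc]; rfl
  exact ⟨a, (tendsto_add_atTop_iff_nat N).1 ha⟩

/-- For the resonance (`ε = 0`) model recursion
`uₙ₊₁ = (diag(1, 1 − 2β/n) + Rₙ) uₙ` with `∑ ‖Rₙ‖ < ∞`, every solution converges,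
the map `u₁ ↦ lim uₙ` is linear of rank at most one, and the limit always lies in
the span of `(1,0)`. -/
theorem resonance_recursion_limit (β : ℝ) (hβ : 0 < β)
    (R : ℕ → Matrix (Fin 2) (Fin 2) ℂ) (hR : Summable fun n => ‖R n‖) :
    ∃ T : (Fin 2 → ℂ) →ₗ[ℂ] (Fin 2 → ℂ),
      (∀ f : Fin 2 → ℂ, ∃ c : ℂ, T f = c • ![1, 0]) ∧
      ∀ f : Fin 2 → ℂ, ∀ u : ℕ → Fin 2 → ℂ, u 1 = f →
        (∀ n : ℕ, 1 ≤ n →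
          u (n + 1) = (Matrix.diagonal ![1, 1 - ((2 * β / n : ℝ) : ℂ)] + R n).mulVec (u n)) →
        Tendsto u atTop (nhds (T f)) := by
  set A : ℕ → Matrix (Fin 2) (Fin 2) ℂ := fun n =>
    diagonal ![1, 1 - ((2 * β / (n + 1 : ℕ) : ℝ) : ℂ)] + R (n + 1)
  have hlim (f : Fin 2 → ℂ) : ∃ a : ℂ, Tendsto (fun n => transferMatrix A n *ᵥ f) atTop
      (𝓝 (a • ![1, 0])) :=
    exists_tendsto_smul_of_resonance hβ hR fun n => transferMatrix_succ_mulVec A n f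
  choose a ha using hlim
  refine ⟨linearMapOfTendsto _ (fun n => (transferMatrix A n).mulVecLin) (tendsto_pi_nhds.2 ha),
    fun f => ⟨a f, rfl⟩, fun f u hu1 hu => ?_⟩
  have hsol : ∀ n, u (n + 1) = transferMatrix A n *ᵥ f := fun n => by
    rw [← hu1]
    exact eq_transferMatrix_mulVec (u := fun k => u (k + 1))
      (fun k => hu (k + 1) (Nat.le_add_left 1 k)) n
  exact (tendsto_add_atTop_iff_nat 1).1 (by simpa only [hsol, linearMapOfTendsto_apply] using ha f)
end
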